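/- Fix a probability measure π on Ω = C([0,1],ℝⁿ) and θ > 0, and let V(x,t) = −2θ ∫_{ℝⁿ} e^{−|x−z|²} dπ_t(z) with π_t = (e_t)_♯π. Then any critical point γ₀ of the functional c₀(γ) = ∫₀¹ ½|γ'(t)|² dt + 2θ∫₀¹∫_{ℝⁿ} e^{−|γ(t)−z|²} dπ_t(z) dt satisfies |γ₀''(t)| ≤ 4θ for all t; consequently γ₀(t) = γ_euc(t) + θE(θ,t) where γ_euc(t) = γ₀(0) + t(γ₀(1) − γ₀(0)) and sup_{t∈[0,1]} |E(θ,t)| ≤ 4√n. -/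

import Mathlib

/-!
The Euler–Lagrange equation writes `γ₀''` as `-4θ` times an average of the vectors
`e^{-|x - z|²} (x - z)`, each of norm `r e^{-r²} ≤ 1`, so `|γ₀''| ≤ 4θ`. A curve whose second
derivative is bounded by `M` on `[0, 1]` stays within `M` of its chord: the Taylor remainder
`γ(t) - γ(0) - t γ'(0)` is at most `M t² / 2`, and the chord differs from the tangent line at `0`
by `t` times the remainder at `1`. Dividing the deviation by `θ` gives `E` with `|E| ≤ 4 ≤ 4√n`.
-/

open MeasureTheory Set

lemma exp_neg_sq_mul_le_one (r : ℝ) : Real.exp (-r ^ 2) * r ≤ 1 := by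
  have hr : r ≤ Real.exp (r ^ 2) := by nlinarith [Real.add_one_le_exp (r ^ 2)]
  rw [Real.exp_neg, inv_mul_le_iff₀ (Real.exp_pos _), mul_one]
  exact hr

lemma norm_integral_exp_neg_sq_smul_le_one {E : Type*} [NormedAddCommGroup E] [NormedSpace ℝ E]
    [MeasurableSpace E] (μ : Measure E) [IsZeroOrProbabilityMeasure μ] (x : E) :
    ‖∫ z, Real.exp (-‖x - z‖ ^ 2) • (x - z) ∂μ‖ ≤ 1 := by
  have hforce : ∀ z, ‖Real.exp (-‖x - z‖ ^ 2) • (x - z)‖ ≤ 1 := fun z => by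
    rw [norm_smul, Real.norm_of_nonneg (Real.exp_pos _).le]
    exact exp_neg_sq_mul_le_one _
  calc ‖∫ z, Real.exp (-‖x - z‖ ^ 2) • (x - z) ∂μ‖
      ≤ 1 * μ.real univ := norm_integral_le_of_norm_le_const (.of_forall hforce)
    _ ≤ 1 := by rw [one_mul]; exact measureReal_le_one

section SecondDerivative

variable {E : Type*} [NormedAddCommGroup E] [NormedSpace ℝ E] {f : ℝ → E} {M : ℝ}

lemma norm_sub_sub_smul_deriv_le (hf : Differentiable ℝ f) (hf' : Differentiable ℝ (deriv f))
    (hM : ∀ t ∈ Icc (0 : ℝ) 1, ‖deriv (deriv f) t‖ ≤ M) {t : ℝ} (ht : t ∈ Icc (0 : ℝ) 1) :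
    ‖f t - f 0 - t • deriv f 0‖ ≤ M * t ^ 2 / 2 := by
  have hslope : ∀ s ∈ Icc (0 : ℝ) 1, ‖deriv f s - deriv f 0‖ ≤ M * s := fun s hs => by
    simpa using norm_image_sub_le_of_norm_deriv_le_segment'
      (fun x _ => (hf' x).hasDerivAt.hasDerivWithinAt) (fun x hx => hM x (Ico_subset_Icc_self hx))
      s hs
  have hderiv : ∀ s, HasDerivAt (fun s => f s - f 0 - s • deriv f 0)
      (deriv f s - deriv f 0) s := fun s =>
    ((hf s).hasDerivAt.sub_const (f 0)).sub
      (by simpa using (hasDerivAt_id s).smul_const (deriv f 0))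
  have hbound : ∀ s, HasDerivAt (fun s : ℝ => M * s ^ 2 / 2) (M * s) s := fun s =>
    (((hasDerivAt_pow 2 s).const_mul M).div_const 2).congr_deriv (by norm_num; ring)
  exact image_norm_le_of_norm_deriv_right_le_deriv_boundary
    (fun s _ => (hderiv s).continuousAt.continuousWithinAt)
    (fun s _ => (hderiv s).hasDerivWithinAt) (by simp) hbound
    (fun s hs => hslope s (Ico_subset_Icc_self hs)) ht

lemma norm_sub_chord_le (hf : Differentiable ℝ f) (hf' : Differentiable ℝ (deriv f))
    (hM : ∀ t ∈ Icc (0 : ℝ) 1, ‖deriv (deriv f) t‖ ≤ M) {t : ℝ} (ht : t ∈ Icc (0 : ℝ) 1) :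
    ‖f t - (f 0 + t • (f 1 - f 0))‖ ≤ M := by
  have hM₀ : 0 ≤ M := (norm_nonneg _).trans (hM 0 (left_mem_Icc.2 zero_le_one))
  have hdecomp : f t - (f 0 + t • (f 1 - f 0)) =
      (f t - f 0 - t • deriv f 0) - t • (f 1 - f 0 - (1 : ℝ) • deriv f 0) := by
    simp only [one_smul, smul_sub]
    abel
  calc ‖f t - (f 0 + t • (f 1 - f 0))‖
      ≤ ‖f t - f 0 - t • deriv f 0‖ + t * ‖f 1 - f 0 - (1 : ℝ) • deriv f 0‖ := by
        rw [hdecomp, ← norm_smul_of_nonneg ht.1]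
        exact norm_sub_le _ _
    _ ≤ M * t ^ 2 / 2 + t * (M * 1 ^ 2 / 2) := by
        gcongr
        · exact norm_sub_sub_smul_deriv_le hf hf' hM ht
        · exact ht.1
        · exact norm_sub_sub_smul_deriv_le hf hf' hM (right_mem_Icc.2 zero_le_one)
    _ ≤ M := by nlinarith [ht.1, ht.2, mul_le_one₀ ht.2 ht.1 ht.2]

end SecondDerivative

lemma EuclideanSpace.norm_le_mul_sqrt_of_norm_le {n : ℕ} {x : EuclideanSpace ℝ (Fin n)} {c : ℝ}
    (h : ‖x‖ ≤ c) : ‖x‖ ≤ c * √n := by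
  rcases n with _ | n
  · simp [Subsingleton.elim x 0]
  · have : (1 : ℝ) ≤ √(n + 1 : ℕ) := Real.one_le_sqrt.2 (by simp)
    nlinarith [(norm_nonneg x).trans h]

theorem critical_path_close_to_straight_line_general (n : ℕ)
    [mΩ : MeasurableSpace C(Set.Icc (0:ℝ) 1, EuclideanSpace ℝ (Fin n))]
    (π : Measure C(Set.Icc (0:ℝ) 1, EuclideanSpace ℝ (Fin n))) [IsProbabilityMeasure π]
    (θ : ℝ) (hθ : 0 < θ)
    (γ₀ : ℝ → EuclideanSpace ℝ (Fin n)) (hγ : ContDiff ℝ 2 γ₀)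
    -- Euler–Lagrange equation for critical points of the interacting functional
    (hEL : ∀ t ∈ Set.Icc (0:ℝ) 1,
      deriv (deriv γ₀) t =
        (-(4 * θ)) • ∫ z, Real.exp (-‖γ₀ t - z‖^2) • (γ₀ t - z)
          ∂(π.map fun σ => σ (Set.projIcc 0 1 zero_le_one t))) :
    (∀ t ∈ Set.Icc (0:ℝ) 1, ‖deriv (deriv γ₀) t‖ ≤ 4 * θ) ∧
    ∃ E : ℝ → EuclideanSpace ℝ (Fin n),
      (∀ t ∈ Set.Icc (0:ℝ) 1, γ₀ t = (γ₀ 0 + t • (γ₀ 1 - γ₀ 0)) + θ • E t) ∧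
      ∀ t ∈ Set.Icc (0:ℝ) 1, ‖E t‖ ≤ 4 * Real.sqrt n := by
  have hM : ∀ t ∈ Icc (0:ℝ) 1, ‖deriv (deriv γ₀) t‖ ≤ 4 * θ := fun t ht => by
    rw [hEL t ht, norm_smul, norm_neg, Real.norm_of_nonneg (by positivity)]
    exact mul_le_of_le_one_right (by positivity) (norm_integral_exp_neg_sq_smul_le_one _ _)
  have hγ₁ : Differentiable ℝ γ₀ := hγ.differentiable (by norm_num)
  have hγ₂ : Differentiable ℝ (deriv γ₀) := (hγ.iterate_deriv' 1 1).differentiable (by norm_num)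
  refine ⟨hM, fun t => θ⁻¹ • (γ₀ t - (γ₀ 0 + t • (γ₀ 1 - γ₀ 0))), fun t _ => ?_, fun t ht => ?_⟩
  · rw [smul_inv_smul₀ hθ.ne']
    abel
  · apply EuclideanSpace.norm_le_mul_sqrt_of_norm_le
    calc ‖θ⁻¹ • (γ₀ t - (γ₀ 0 + t • (γ₀ 1 - γ₀ 0)))‖
        = θ⁻¹ * ‖γ₀ t - (γ₀ 0 + t • (γ₀ 1 - γ₀ 0))‖ := norm_smul_of_nonneg (by positivity) _
      _ ≤ θ⁻¹ * (4 * θ) := by gcongr; exact norm_sub_chord_le hγ₁ hγ₂ hM ht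
      _ = 4 := by field_simp

theorem critical_path_close_to_straight_line (n : ℕ)
    [mΩ : MeasurableSpace C(Set.Icc (0:ℝ) 1, EuclideanSpace ℝ (Fin n))]
    [BorelSpace C(Set.Icc (0:ℝ) 1, EuclideanSpace ℝ (Fin n))]
    (π : Measure C(Set.Icc (0:ℝ) 1, EuclideanSpace ℝ (Fin n))) [IsProbabilityMeasure π]
    (θ : ℝ) (hθ : 0 < θ)
    (γ₀ : ℝ → EuclideanSpace ℝ (Fin n)) (hγ : ContDiff ℝ 2 γ₀)
    -- Euler–Lagrange equation for critical points of the interacting functional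
    (hEL : ∀ t ∈ Set.Icc (0:ℝ) 1,
      deriv (deriv γ₀) t =
        (-(4 * θ)) • ∫ z, Real.exp (-‖γ₀ t - z‖^2) • (γ₀ t - z)
          ∂(π.map fun σ => σ (Set.projIcc 0 1 zero_le_one t))) :
    (∀ t ∈ Set.Icc (0:ℝ) 1, ‖deriv (deriv γ₀) t‖ ≤ 4 * θ) ∧
    ∃ E : ℝ → EuclideanSpace ℝ (Fin n),
      (∀ t ∈ Set.Icc (0:ℝ) 1, γ₀ t = (γ₀ 0 + t • (γ₀ 1 - γ₀ 0)) + θ • E t) ∧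
      ∀ t ∈ Set.Icc (0:ℝ) 1, ‖E t‖ ≤ 4 * Real.sqrt n :=
  critical_path_close_to_straight_line_general n (mΩ := mΩ) π θ hθ γ₀ hγ hEL
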